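/- arXiv:2010.09123 — 2 statements merged into one kernel-verified Lean document; each statement's English description precedes it below -/
import Mathlib

section
/- Fix integers n ≥ 2 and e ≥ n-1, and a prime p. Let b(n,e) = max over integers d with 0 ≤ d ≤ n-1 of ⌊e/(n-1+d)⌋ · d · (n-1-d). Then the number of subrings of index p^e in Z^n satisfies f_n(p^e) ≥ p^{b(n,e)}. -/
/-- `numSubrings n k` is the number of subrings of index `k` in `ℤⁿ`: finite-index
additive subgroups containing `(1,…,1)` and closed under componentwise multiplication. -/
noncomputable def numSubrings (n k : ℕ) : ℕ :=
  Nat.card {S : AddSubgroup (Fin n → ℤ) //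
    (1 : Fin n → ℤ) ∈ S ∧ (∀ x ∈ S, ∀ y ∈ S, x * y ∈ S) ∧ S.index = k}

namespace Stmt10

def c1 (k m r t : ℕ) : ℕ := if 1 ≤ t ∧ t ≤ k then m + (if t = 1 then r else 0) else 0

def c2 (k m t : ℕ) : ℕ := if k + 1 ≤ t then 2 * m else 0

variable {n : ℕ} [NeZero n]

/-- divided difference vector -/
def Q (p r : ℕ) (x : Fin n → ℤ) (s : Fin n) : ℤ :=
  if s.val = 1 then (x s - x 0) / (p : ℤ) ^ r else x s - x 0

def Cond1 (p k m r : ℕ) (x : Fin n → ℤ) : Prop :=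
  ∀ t : Fin n, ((p : ℤ) ^ c1 k m r t.val) ∣ (x t - x 0)

def Cond2 (p k m r : ℕ) (A : Fin n → Fin n → ℤ) (x : Fin n → ℤ) : Prop :=
  ∀ t : Fin n, ((p : ℤ) ^ c2 k m t.val) ∣ (x t - x 0 - ∑ s, A s t * Q p r x s)

lemma c1_one {k m r : ℕ} (hk : 1 ≤ k) : c1 k m r 1 = m + r := by simp [c1, hk]

lemma cond1_imp {p k m r : ℕ} {x : Fin n → ℤ} (hk : 1 ≤ k) (hx : Cond1 p k m r x) :
    ∀ s : Fin n, s.val = 1 → ((p : ℤ) ^ r) ∣ (x s - x 0) := by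
  intro s hs
  have h := hx s
  rw [hs, c1_one hk] at h
  exact dvd_trans (pow_dvd_pow _ (Nat.le_add_left r m)) h

lemma Q_add {p r : ℕ} {x y : Fin n → ℤ} (hpr : ((p : ℤ) ^ r) ≠ 0)
    (hx : ∀ s : Fin n, s.val = 1 → ((p : ℤ) ^ r) ∣ (x s - x 0))
    (hy : ∀ s : Fin n, s.val = 1 → ((p : ℤ) ^ r) ∣ (y s - y 0)) (s : Fin n) :
    Q p r (x + y) s = Q p r x s + Q p r y s := by
  unfold Q
  by_cases hs : s.val = 1
  · simp only [hs, if_true, Pi.add_apply]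
    obtain ⟨cx, hcx⟩ := hx s hs
    obtain ⟨cy, hcy⟩ := hy s hs
    have h1 : x s + y s - (x 0 + y 0) = (p : ℤ) ^ r * (cx + cy) := by
      have : x s + y s - (x 0 + y 0) = (x s - x 0) + (y s - y 0) := by ring
      rw [this, hcx, hcy]; ring
    rw [h1, hcx, hcy, Int.mul_ediv_cancel_left _ hpr, Int.mul_ediv_cancel_left _ hpr,
      Int.mul_ediv_cancel_left _ hpr]
  · simp only [hs, if_false, Pi.add_apply]; ring

lemma Q_neg {p r : ℕ} {x : Fin n → ℤ} (hpr : ((p : ℤ) ^ r) ≠ 0)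
    (hx : ∀ s : Fin n, s.val = 1 → ((p : ℤ) ^ r) ∣ (x s - x 0)) (s : Fin n) :
    Q p r (-x) s = - Q p r x s := by
  unfold Q
  by_cases hs : s.val = 1
  · simp only [hs, if_true, Pi.neg_apply]
    obtain ⟨cx, hcx⟩ := hx s hs
    have h1 : -x s - -x 0 = (p : ℤ) ^ r * (-cx) := by
      have : -x s - -x 0 = -(x s - x 0) := by ring
      rw [this, hcx]; ring
    rw [h1, hcx, Int.mul_ediv_cancel_left _ hpr, Int.mul_ediv_cancel_left _ hpr]
  · simp only [hs, if_false, Pi.neg_apply]; ring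

lemma Q_zero {p r : ℕ} (s : Fin n) : Q p r (0 : Fin n → ℤ) s = 0 := by
  simp [Q]

lemma Q_one {p r : ℕ} (s : Fin n) : Q p r (1 : Fin n → ℤ) s = 0 := by
  simp [Q]

lemma Q_mul {p r : ℕ} {x y : Fin n → ℤ} (hpr : ((p : ℤ) ^ r) ≠ 0)
    (hx : ∀ s : Fin n, s.val = 1 → ((p : ℤ) ^ r) ∣ (x s - x 0))
    (hy : ∀ s : Fin n, s.val = 1 → ((p : ℤ) ^ r) ∣ (y s - y 0)) (s : Fin n) :
    Q p r (x * y) s = (if s.val = 1 then (p : ℤ) ^ r else 1) * Q p r x s * Q p r y s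
      + x 0 * Q p r y s + y 0 * Q p r x s := by
  unfold Q
  by_cases hs : s.val = 1
  · simp only [hs, if_true, Pi.mul_apply]
    obtain ⟨cx, hcx⟩ := hx s hs
    obtain ⟨cy, hcy⟩ := hy s hs
    have hxs : x s = x 0 + (p : ℤ) ^ r * cx := by linarith [hcx]
    have hys : y s = y 0 + (p : ℤ) ^ r * cy := by linarith [hcy]
    have h1 : x s * y s - x 0 * y 0
        = (p : ℤ) ^ r * ((p : ℤ) ^ r * cx * cy + x 0 * cy + y 0 * cx) := by
      rw [hxs, hys]; ring
    rw [h1, hcx, hcy, Int.mul_ediv_cancel_left _ hpr, Int.mul_ediv_cancel_left _ hpr,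
      Int.mul_ediv_cancel_left _ hpr]
  · simp only [hs, if_false, Pi.mul_apply]
    ring


lemma dvd_Q {p k m r : ℕ} {x : Fin n → ℤ} (hpr : ((p : ℤ) ^ r) ≠ 0)
    (hx : Cond1 p k m r x) {s : Fin n} (hs : 1 ≤ s.val ∧ s.val ≤ k) :
    ((p : ℤ) ^ m) ∣ Q p r x s := by
  unfold Q
  by_cases h1 : s.val = 1
  · rw [if_pos h1]
    have h := hx s
    rw [h1] at h
    have hc1 : c1 k m r 1 = m + r := by simp [c1, hs.1, h1 ▸ hs.2]
    rw [hc1] at h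
    obtain ⟨c, hc⟩ := h
    have : x s - x 0 = (p : ℤ) ^ r * ((p : ℤ) ^ m * c) := by
      rw [hc, pow_add]; ring
    rw [this, Int.mul_ediv_cancel_left _ hpr]
    exact Dvd.intro c rfl
  · rw [if_neg h1]
    have h := hx s
    have hc1 : c1 k m r s.val = m := by simp [c1, hs, h1]
    rw [hc1] at h
    exact h

def SR (p k m r : ℕ) (A : Fin n → Fin n → ℤ) (hpr : ((p : ℤ) ^ r) ≠ 0) (hk : 1 ≤ k) :
    AddSubgroup (Fin n → ℤ) where
  carrier := {x | Cond1 p k m r x ∧ Cond2 p k m r A x}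
  zero_mem' := by
    constructor
    · intro t; simp
    · intro t; simp [Q_zero]
  add_mem' := by
    rintro x y ⟨hx1, hx2⟩ ⟨hy1, hy2⟩
    have hdx := cond1_imp hk hx1
    have hdy := cond1_imp hk hy1
    constructor
    · intro t
      have h : (x + y) t - (x + y) 0 = (x t - x 0) + (y t - y 0) := by
        simp only [Pi.add_apply]; ring
      rw [h]
      exact dvd_add (hx1 t) (hy1 t)
    · intro t
      have h : (x + y) t - (x + y) 0 - ∑ s, A s t * Q p r (x + y) s
          = (x t - x 0 - ∑ s, A s t * Q p r x s) + (y t - y 0 - ∑ s, A s t * Q p r y s) := by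
        have hsum : ∑ s, A s t * Q p r (x + y) s
            = ∑ s, A s t * Q p r x s + ∑ s, A s t * Q p r y s := by
          rw [← Finset.sum_add_distrib]
          refine Finset.sum_congr rfl fun s _ => ?_
          rw [Q_add hpr hdx hdy s]; ring
        rw [hsum]; simp only [Pi.add_apply]; ring
      rw [h]
      exact dvd_add (hx2 t) (hy2 t)
  neg_mem' := by
    rintro x ⟨hx1, hx2⟩
    have hdx := cond1_imp hk hx1
    constructor
    · intro t
      have h : (-x) t - (-x) 0 = -(x t - x 0) := by simp only [Pi.neg_apply]; ring
      rw [h]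
      exact (hx1 t).neg_right
    · intro t
      have h : (-x) t - (-x) 0 - ∑ s, A s t * Q p r (-x) s
          = -(x t - x 0 - ∑ s, A s t * Q p r x s) := by
        have hsum : ∑ s, A s t * Q p r (-x) s = -∑ s, A s t * Q p r x s := by
          rw [← Finset.sum_neg_distrib]
          refine Finset.sum_congr rfl fun s _ => ?_
          rw [Q_neg hpr hdx s]; ring
        rw [hsum]; simp only [Pi.neg_apply]; ring
      rw [h]
      exact (hx2 t).neg_right

lemma mem_SR {p k m r : ℕ} {A : Fin n → Fin n → ℤ} {hpr : ((p : ℤ) ^ r) ≠ 0} {hk : 1 ≤ k}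
    {x : Fin n → ℤ} : x ∈ SR p k m r A hpr hk ↔ Cond1 p k m r x ∧ Cond2 p k m r A x :=
  Iff.rfl

lemma one_mem_SR {p k m r : ℕ} {A : Fin n → Fin n → ℤ} (hpr : ((p : ℤ) ^ r) ≠ 0) (hk : 1 ≤ k) :
    (1 : Fin n → ℤ) ∈ SR p k m r A hpr hk := by
  rw [mem_SR]
  constructor
  · intro t; simp
  · intro t; simp [Q_one]

lemma dvd_coord {p k m r : ℕ} {A : Fin n → Fin n → ℤ} (hpr : ((p : ℤ) ^ r) ≠ 0) (hk : 1 ≤ k)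
    (hA : ∀ s t : Fin n, ¬(1 ≤ s.val ∧ s.val ≤ k ∧ k + 1 ≤ t.val) → A s t = 0)
    {x : Fin n → ℤ} (hx1 : Cond1 p k m r x) (hx2 : Cond2 p k m r A x)
    {t : Fin n} (ht : k + 1 ≤ t.val) : ((p : ℤ) ^ m) ∣ (x t - x 0) := by
  have hsum : ((p : ℤ) ^ m) ∣ ∑ s, A s t * Q p r x s := by
    refine Finset.dvd_sum fun s _ => ?_
    by_cases hs : 1 ≤ s.val ∧ s.val ≤ k
    · exact Dvd.dvd.mul_left (dvd_Q hpr hx1 hs) _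
    · rw [hA s t (by tauto), zero_mul]
      exact dvd_zero _
  have h2 := hx2 t
  have hc2 : c2 k m t.val = 2 * m := if_pos ht
  rw [hc2] at h2
  have h2' : ((p : ℤ) ^ m) ∣ (x t - x 0 - ∑ s, A s t * Q p r x s) :=
    dvd_trans (pow_dvd_pow _ (by omega)) h2
  have : x t - x 0 = (x t - x 0 - ∑ s, A s t * Q p r x s) + ∑ s, A s t * Q p r x s := by ring
  rw [this]
  exact dvd_add h2' hsum

lemma mul_mem_SR {p k m r : ℕ} {A : Fin n → Fin n → ℤ} (hpr : ((p : ℤ) ^ r) ≠ 0) (hk : 1 ≤ k)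
    (hA : ∀ s t : Fin n, ¬(1 ≤ s.val ∧ s.val ≤ k ∧ k + 1 ≤ t.val) → A s t = 0)
    {x y : Fin n → ℤ} (hx : x ∈ SR p k m r A hpr hk) (hy : y ∈ SR p k m r A hpr hk) :
    x * y ∈ SR p k m r A hpr hk := by
  rw [mem_SR] at hx hy ⊢
  obtain ⟨hx1, hx2⟩ := hx
  obtain ⟨hy1, hy2⟩ := hy
  have hdx := cond1_imp hk hx1
  have hdy := cond1_imp hk hy1
  constructor
  · intro t
    have h : (x * y) t - (x * y) 0
        = (x t - x 0) * (y t - y 0) + x 0 * (y t - y 0) + y 0 * (x t - x 0) := by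
      simp only [Pi.mul_apply]; ring
    rw [h]
    refine dvd_add (dvd_add ?_ ?_) ?_
    · exact Dvd.dvd.mul_right (hx1 t) _
    · exact Dvd.dvd.mul_left (hy1 t) _
    · exact Dvd.dvd.mul_left (hx1 t) _
  · intro t
    have hsum : ∑ s, A s t * Q p r (x * y) s
        = ∑ s, A s t * ((if s.val = 1 then (p : ℤ) ^ r else 1) * Q p r x s * Q p r y s)
          + x 0 * ∑ s, A s t * Q p r y s + y 0 * ∑ s, A s t * Q p r x s := by
      rw [Finset.mul_sum, Finset.mul_sum, ← Finset.sum_add_distrib, ← Finset.sum_add_distrib]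
      refine Finset.sum_congr rfl fun s _ => ?_
      rw [Q_mul hpr hdx hdy s]; ring
    have key : (x * y) t - (x * y) 0 - ∑ s, A s t * Q p r (x * y) s
        = x 0 * (y t - y 0 - ∑ s, A s t * Q p r y s)
          + y 0 * (x t - x 0 - ∑ s, A s t * Q p r x s)
          + ((x t - x 0) * (y t - y 0)
            - ∑ s, A s t * ((if s.val = 1 then (p : ℤ) ^ r else 1) * Q p r x s * Q p r y s)) := by
      rw [hsum]; simp only [Pi.mul_apply]; ring
    rw [key]
    by_cases ht : k + 1 ≤ t.val
    · have hc2 : c2 k m t.val = 2 * m := if_pos ht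
      rw [hc2]
      have h2m : ((p : ℤ) ^ (2 * m)) = (p : ℤ) ^ m * (p : ℤ) ^ m := by
        rw [two_mul, pow_add]
      refine dvd_add (dvd_add ?_ ?_) ?_
      · have h := hy2 t
        rw [hc2] at h
        exact Dvd.dvd.mul_left h _
      · have h := hx2 t
        rw [hc2] at h
        exact Dvd.dvd.mul_left h _
      · rw [h2m]
        refine dvd_sub ?_ ?_
        · exact mul_dvd_mul (dvd_coord hpr hk hA hx1 hx2 ht) (dvd_coord hpr hk hA hy1 hy2 ht)
        · refine Finset.dvd_sum fun s _ => ?_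
          by_cases hs : 1 ≤ s.val ∧ s.val ≤ k
          · have heq : A s t * ((if s.val = 1 then (p : ℤ) ^ r else 1) * Q p r x s * Q p r y s)
                = (A s t * (if s.val = 1 then (p : ℤ) ^ r else 1)) * (Q p r x s * Q p r y s) := by
              ring
            rw [heq]
            exact Dvd.dvd.mul_left (mul_dvd_mul (dvd_Q hpr hx1 hs) (dvd_Q hpr hy1 hs)) _
          · rw [hA s t (by tauto), zero_mul]
            exact dvd_zero _
    · have hc2 : c2 k m t.val = 0 := if_neg ht
      rw [hc2, pow_zero]
      exact one_dvd _


def phi1 (p k m r : ℕ) : (Fin n → ℤ) →+ ((t : Fin n) → ZMod (p ^ c1 k m r t.val)) where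
  toFun x := fun t => ((x t - x 0 : ℤ) : ZMod (p ^ c1 k m r t.val))
  map_zero' := by funext t; simp
  map_add' x y := by
    funext t
    simp only [Pi.add_apply]
    push_cast
    ring

lemma mem_ker_phi1 {p k m r : ℕ} {x : Fin n → ℤ} :
    x ∈ (phi1 (n := n) p k m r).ker ↔ Cond1 p k m r x := by
  simp only [AddMonoidHom.mem_ker, phi1, AddMonoidHom.coe_mk, ZeroHom.coe_mk, funext_iff,
    Pi.zero_apply, ZMod.intCast_zmod_eq_zero_iff_dvd, Cond1]
  push_cast
  rfl

lemma phi1_surjective (p k m r : ℕ) : Function.Surjective (phi1 (n := n) p k m r) := by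
  intro v
  have hc : ∀ t : Fin n, ∃ w : ℤ, ((w : ZMod (p ^ c1 k m r t.val))) = v t :=
    fun t => ZMod.intCast_surjective (v t)
  choose w hw using hc
  refine ⟨fun t => if t.val = 0 then 0 else w t, ?_⟩
  funext t
  show (((if t.val = 0 then 0 else w t) - (if (0 : Fin n).val = 0 then 0 else w 0) : ℤ)
      : ZMod (p ^ c1 k m r t.val)) = v t
  rw [if_pos (Fin.val_zero n)]
  by_cases ht : t.val = 0
  · have hc1 : c1 k m r t.val = 0 := by simp [c1, ht]
    haveI : Subsingleton (ZMod (p ^ c1 k m r t.val)) := by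
      rw [hc1, pow_zero]
      infer_instance
    exact Subsingleton.elim _ _
  · rw [if_neg ht, sub_zero]
    exact hw t

lemma sum_c1 {k l m r : ℕ} (hn : n = k + l + 1) (hk : 1 ≤ k) :
    ∑ t : Fin n, c1 k m r t.val = m * k + r := by
  rw [Fin.sum_univ_eq_sum_range (fun i => c1 k m r i) n]
  have step : ∀ x ∈ Finset.range n, c1 k m r x
      = (if x ∈ Finset.Ico 1 (k + 1) then m else 0) + (if x = 1 then r else 0) := by
    intro x _
    simp only [Finset.mem_Ico]
    unfold c1
    by_cases h : 1 ≤ x ∧ x ≤ k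
    · rw [if_pos h, if_pos (show 1 ≤ x ∧ x < k + 1 by omega)]
    · rw [if_neg h, if_neg (by omega), if_neg (by omega)]
  rw [Finset.sum_congr rfl step, Finset.sum_add_distrib]
  have e1 : ∑ x ∈ Finset.range n, (if x ∈ Finset.Ico 1 (k + 1) then m else 0) = m * k := by
    rw [Finset.sum_ite_mem, Finset.range_eq_Ico, Finset.Ico_inter_Ico]
    have h1 : max 0 1 = 1 := rfl
    have h2 : min n (k + 1) = k + 1 := min_eq_right (by omega)
    rw [h1, h2, Finset.sum_const, Nat.card_Ico, smul_eq_mul, Nat.add_sub_cancel,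
      Nat.mul_comm]
  have e2 : ∑ x ∈ Finset.range n, (if x = 1 then r else 0) = r := by
    rw [Finset.sum_ite_eq' (Finset.range n) 1 (fun _ => r), if_pos]
    exact Finset.mem_range.mpr (by omega)
  rw [e1, e2]

lemma sum_c2 {k l m : ℕ} (hn : n = k + l + 1) :
    ∑ t : Fin n, c2 k m t.val = 2 * m * l := by
  rw [Fin.sum_univ_eq_sum_range (fun i => c2 k m i) n]
  have step : ∀ x ∈ Finset.range n, c2 k m x
      = (if x ∈ Finset.Ico (k + 1) n then 2 * m else 0) := by
    intro x hx
    have hxn : x < n := Finset.mem_range.mp hx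
    by_cases h : k + 1 ≤ x
    · simp [c2, h, Finset.mem_Ico, hxn]
    · have : x ∉ Finset.Ico (k + 1) n := by simp only [Finset.mem_Ico]; omega
      simp [c2, h, this]
  rw [Finset.sum_congr rfl step, Finset.sum_ite_mem, Finset.range_eq_Ico, Finset.Ico_inter_Ico]
  have h1 : max 0 (k + 1) = k + 1 := by omega
  have h2 : min n n = n := min_self n
  rw [h1, h2, Finset.sum_const, Nat.card_Ico, smul_eq_mul]
  have : n - (k + 1) = l := by omega
  rw [this]
  ring

lemma card_pi_zmod {c : Fin n → ℕ} (p : ℕ) :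
    Nat.card ((t : Fin n) → ZMod (p ^ c t)) = p ^ (∑ t : Fin n, c t) := by
  rw [Nat.card_pi]
  have : ∀ t : Fin n, Nat.card (ZMod (p ^ c t)) = p ^ c t := fun t => Nat.card_zmod _
  rw [Finset.prod_congr rfl (fun t _ => this t), Finset.prod_pow_eq_pow_sum]

lemma index_ker_phi1 {p k l m r : ℕ} (hn : n = k + l + 1) (hk : 1 ≤ k) :
    (phi1 (n := n) p k m r).ker.index = p ^ (m * k + r) := by
  rw [AddSubgroup.index_ker, AddMonoidHom.range_eq_top_of_surjective _ (phi1_surjective p k m r)]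
  rw [AddSubgroup.card_top]
  rw [card_pi_zmod p, sum_c1 hn hk]

def psi (p k m r : ℕ) (A : Fin n → Fin n → ℤ) (hpr : ((p : ℤ) ^ r) ≠ 0) (hk : 1 ≤ k) :
    ((phi1 (n := n) p k m r).ker) →+ ((t : Fin n) → ZMod (p ^ c2 k m t.val)) where
  toFun x := fun t => ((x.val t - x.val 0 - ∑ s, A s t * Q p r x.val s : ℤ)
    : ZMod (p ^ c2 k m t.val))
  map_zero' := by
    funext t
    simp [Q_zero]
  map_add' x y := by
    funext t
    have hdx := cond1_imp hk (mem_ker_phi1.mp x.2)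
    have hdy := cond1_imp hk (mem_ker_phi1.mp y.2)
    have hco : ((x + y : (phi1 (n := n) p k m r).ker) : Fin n → ℤ) = x.val + y.val := rfl
    show ((((x + y : (phi1 (n := n) p k m r).ker) : Fin n → ℤ) t
        - ((x + y : (phi1 (n := n) p k m r).ker) : Fin n → ℤ) 0
        - ∑ s, A s t * Q p r ((x + y : (phi1 (n := n) p k m r).ker) : Fin n → ℤ) s : ℤ)
      : ZMod (p ^ c2 k m t.val)) = _
    rw [hco]
    have h : (x.val + y.val) t - (x.val + y.val) 0 - ∑ s, A s t * Q p r (x.val + y.val) s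
        = (x.val t - x.val 0 - ∑ s, A s t * Q p r x.val s)
          + (y.val t - y.val 0 - ∑ s, A s t * Q p r y.val s) := by
      have hsum : ∑ s, A s t * Q p r (x.val + y.val) s
          = ∑ s, A s t * Q p r x.val s + ∑ s, A s t * Q p r y.val s := by
        rw [← Finset.sum_add_distrib]
        refine Finset.sum_congr rfl fun s _ => ?_
        rw [Q_add hpr hdx hdy s]; ring
      rw [hsum]; simp only [Pi.add_apply]; ring
    rw [h, Int.cast_add]
    rfl

lemma SR_le_ker {p k m r : ℕ} {A : Fin n → Fin n → ℤ} (hpr : ((p : ℤ) ^ r) ≠ 0) (hk : 1 ≤ k) :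
    SR p k m r A hpr hk ≤ (phi1 (n := n) p k m r).ker :=
  fun _ hx => mem_ker_phi1.mpr hx.1

lemma subgroupOf_SR {p k m r : ℕ} {A : Fin n → Fin n → ℤ} (hpr : ((p : ℤ) ^ r) ≠ 0)
    (hk : 1 ≤ k) :
    (SR p k m r A hpr hk).addSubgroupOf (phi1 (n := n) p k m r).ker
      = (psi p k m r A hpr hk).ker := by
  ext x
  rw [AddSubgroup.mem_addSubgroupOf, AddMonoidHom.mem_ker, mem_SR]
  have hx1 : Cond1 p k m r x.val := mem_ker_phi1.mp x.2
  constructor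
  · rintro ⟨-, h2⟩
    funext t
    show ((x.val t - x.val 0 - ∑ s, A s t * Q p r x.val s : ℤ) : ZMod (p ^ c2 k m t.val)) = 0
    rw [ZMod.intCast_zmod_eq_zero_iff_dvd]
    push_cast
    exact h2 t
  · intro h
    refine ⟨hx1, fun t => ?_⟩
    have := congrFun h t
    rw [show ((psi p k m r A hpr hk) x) t
        = ((x.val t - x.val 0 - ∑ s, A s t * Q p r x.val s : ℤ) : ZMod (p ^ c2 k m t.val))
        from rfl] at this
    rw [Pi.zero_apply, ZMod.intCast_zmod_eq_zero_iff_dvd] at this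
    push_cast at this
    exact this

lemma psi_surjective {p k m r : ℕ} {A : Fin n → Fin n → ℤ} (hpr : ((p : ℤ) ^ r) ≠ 0)
    (hk : 1 ≤ k)
    (hA : ∀ s t : Fin n, ¬(1 ≤ s.val ∧ s.val ≤ k ∧ k + 1 ≤ t.val) → A s t = 0) :
    Function.Surjective (psi (n := n) p k m r A hpr hk) := by
  intro v
  have hc : ∀ t : Fin n, ∃ w : ℤ, ((w : ZMod (p ^ c2 k m t.val))) = v t :=
    fun t => ZMod.intCast_surjective (v t)
  choose w hw using hc
  set x : Fin n → ℤ := fun t => if k + 1 ≤ t.val then w t else 0 with hx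
  have hx0 : x 0 = 0 := by
    rw [hx]
    simp only [Fin.val_zero]
    exact if_neg (by omega)
  have hxmem : x ∈ (phi1 (n := n) p k m r).ker := by
    rw [mem_ker_phi1]
    intro t
    by_cases ht : 1 ≤ t.val ∧ t.val ≤ k
    · have hxt : x t = 0 := by rw [hx]; exact if_neg (by omega)
      rw [hxt, hx0, sub_zero]
      exact dvd_zero _
    · have hc1 : c1 k m r t.val = 0 := by simp [c1, ht]
      rw [hc1, pow_zero]
      exact one_dvd _
  have hQ : ∀ s : Fin n, (1 ≤ s.val ∧ s.val ≤ k) → Q p r x s = 0 := by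
    intro s hs
    have hxs : x s = 0 := by rw [hx]; exact if_neg (by omega)
    unfold Q
    rw [hxs, hx0, sub_zero]
    by_cases h1 : s.val = 1 <;> simp [h1]
  refine ⟨⟨x, hxmem⟩, ?_⟩
  funext t
  show ((x t - x 0 - ∑ s, A s t * Q p r x s : ℤ) : ZMod (p ^ c2 k m t.val)) = v t
  have hsum : ∑ s, A s t * Q p r x s = 0 := by
    refine Finset.sum_eq_zero fun s _ => ?_
    by_cases hs : 1 ≤ s.val ∧ s.val ≤ k
    · rw [hQ s hs, mul_zero]
    · rw [hA s t (by tauto), zero_mul]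
  rw [hsum, hx0, sub_zero, sub_zero]
  by_cases ht : k + 1 ≤ t.val
  · have hxt : x t = w t := by rw [hx]; exact if_pos ht
    rw [hxt]
    exact hw t
  · have hc2 : c2 k m t.val = 0 := by simp [c2, ht]
    haveI : Subsingleton (ZMod (p ^ c2 k m t.val)) := by
      rw [hc2, pow_zero]
      infer_instance
    exact Subsingleton.elim _ _

lemma SR_index {p k l m r : ℕ} {A : Fin n → Fin n → ℤ} (hpr : ((p : ℤ) ^ r) ≠ 0)
    (hk : 1 ≤ k) (hn : n = k + l + 1)
    (hA : ∀ s t : Fin n, ¬(1 ≤ s.val ∧ s.val ≤ k ∧ k + 1 ≤ t.val) → A s t = 0) :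
    (SR p k m r A hpr hk).index = p ^ (2 * m * l + (m * k + r)) := by
  have hle : SR p k m r A hpr hk ≤ (phi1 (n := n) p k m r).ker := SR_le_ker hpr hk
  have hrel := AddSubgroup.relIndex_mul_index hle
  have h1 : (SR p k m r A hpr hk).relIndex (phi1 (n := n) p k m r).ker = p ^ (2 * m * l) := by
    rw [AddSubgroup.relIndex, subgroupOf_SR hpr hk, AddSubgroup.index_ker,
      AddMonoidHom.range_eq_top_of_surjective _ (psi_surjective hpr hk hA),
      AddSubgroup.card_top, card_pi_zmod p, sum_c2 hn]
  rw [h1, index_ker_phi1 hn hk] at hrel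
  rw [← hrel, ← pow_add]


section Inj

variable {p k l m r : ℕ}

def Amat (hn : n = k + l + 1) (p m : ℕ) (a : Fin k → Fin l → Fin (p ^ m)) :
    Fin n → Fin n → ℤ := fun s t =>
  if h : 1 ≤ s.val ∧ s.val ≤ k ∧ k + 1 ≤ t.val then
    ((a ⟨s.val - 1, by omega⟩ ⟨t.val - (k + 1), by have := t.isLt; omega⟩).val : ℤ)
  else 0

lemma Amat_mask (hn : n = k + l + 1) (a : Fin k → Fin l → Fin (p ^ m)) :
    ∀ s t : Fin n, ¬(1 ≤ s.val ∧ s.val ≤ k ∧ k + 1 ≤ t.val) → Amat hn p m a s t = 0 :=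
  fun _ _ h => dif_neg h

/-- the `j`-th test vector -/
def tv (p m r : ℕ) (hn : n = k + l + 1) (A : Fin n → Fin n → ℤ) (j : Fin k) : Fin n → ℤ :=
  fun t => if t.val = j.val + 1 then (p : ℤ) ^ (c1 k m r (j.val + 1))
    else (p : ℤ) ^ m * A ⟨j.val + 1, by omega⟩ t

lemma tv_zero (hn : n = k + l + 1) (A : Fin n → Fin n → ℤ) (hA : ∀ s t : Fin n, ¬(1 ≤ s.val ∧ s.val ≤ k ∧ k + 1 ≤ t.val) → A s t = 0)
    (j : Fin k) : tv p m r hn A j 0 = 0 := by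
  unfold tv
  rw [if_neg (by simp), hA _ _ (by simp [Fin.val_zero]), mul_zero]

lemma tv_Q (hn : n = k + l + 1) (hpr : ((p : ℤ) ^ r) ≠ 0) (hk : 1 ≤ k)
    (A : Fin n → Fin n → ℤ) (hA : ∀ s t : Fin n, ¬(1 ≤ s.val ∧ s.val ≤ k ∧ k + 1 ≤ t.val) → A s t = 0)
    (j : Fin k) (s : Fin n) :
    Q p r (tv p m r hn A j) s
      = if s.val = j.val + 1 then (p : ℤ) ^ m
        else (p : ℤ) ^ m * A ⟨j.val + 1, by omega⟩ s := by
  have h0 := tv_zero (p := p) (m := m) (r := r) hn A hA j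
  unfold Q
  rw [h0, sub_zero]
  by_cases hs : s.val = j.val + 1
  · rw [if_pos hs]
    show (if s.val = 1 then _ / _ else _) = _
    by_cases h1 : s.val = 1
    · rw [if_pos h1]
      unfold tv
      rw [if_pos hs]
      have hj0 : j.val = 0 := by omega
      have hc1 : c1 k m r (j.val + 1) = m + r := by rw [hj0]; exact c1_one hk
      rw [hc1]
      rw [show ((p : ℤ) ^ (m + r)) = (p : ℤ) ^ r * (p : ℤ) ^ m by rw [pow_add]; ring]
      rw [Int.mul_ediv_cancel_left _ hpr]
    · rw [if_neg h1]
      unfold tv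
      rw [if_pos hs]
      have hj0 : j.val + 1 ≠ 1 := by omega
      have hc1 : c1 k m r (j.val + 1) = m := by
        have : 1 ≤ j.val + 1 ∧ j.val + 1 ≤ k := ⟨by omega, by have := j.isLt; omega⟩
        simp [c1, this, hj0, show j.val ≠ 0 by omega]
      rw [hc1]
  · rw [if_neg hs]
    show (if s.val = 1 then _ / _ else _) = _
    by_cases h1 : s.val = 1
    · rw [if_pos h1]
      unfold tv
      rw [if_neg hs]
      have : A ⟨j.val + 1, by omega⟩ s = 0 := hA _ _ (by omega)
      rw [this, mul_zero, Int.zero_ediv]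
    · rw [if_neg h1]
      unfold tv
      rw [if_neg hs]

lemma tv_sum (hn : n = k + l + 1) (hpr : ((p : ℤ) ^ r) ≠ 0) (hk : 1 ≤ k)
    (A : Fin n → Fin n → ℤ) (hA : ∀ s t : Fin n, ¬(1 ≤ s.val ∧ s.val ≤ k ∧ k + 1 ≤ t.val) → A s t = 0)
    (A' : Fin n → Fin n → ℤ)
    (hA' : ∀ s t : Fin n, ¬(1 ≤ s.val ∧ s.val ≤ k ∧ k + 1 ≤ t.val) → A' s t = 0)
    (j : Fin k) (t : Fin n) :
    ∑ s, A' s t * Q p r (tv p m r hn A j) s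
      = A' ⟨j.val + 1, by omega⟩ t * (p : ℤ) ^ m := by
  rw [Finset.sum_eq_single (⟨j.val + 1, by omega⟩ : Fin n)]
  · rw [tv_Q hn hpr hk A hA j, if_pos rfl]
  · intro s _ hs
    have hsv : s.val ≠ j.val + 1 := by
      intro h
      exact hs (Fin.ext h)
    rw [tv_Q hn hpr hk A hA j, if_neg hsv]
    by_cases hrow : 1 ≤ s.val ∧ s.val ≤ k ∧ k + 1 ≤ t.val
    · have : A ⟨j.val + 1, by omega⟩ s = 0 := hA _ _ (by omega)
      rw [this, mul_zero, mul_zero]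
    · rw [hA' s t hrow, zero_mul]
  · intro h
    exact absurd (Finset.mem_univ _) h

lemma tv_mem (hn : n = k + l + 1) (hpr : ((p : ℤ) ^ r) ≠ 0) (hk : 1 ≤ k)
    (A : Fin n → Fin n → ℤ) (hA : ∀ s t : Fin n, ¬(1 ≤ s.val ∧ s.val ≤ k ∧ k + 1 ≤ t.val) → A s t = 0)
    (j : Fin k) : tv p m r hn A j ∈ SR p k m r A hpr hk := by
  have h0 := tv_zero (p := p) (m := m) (r := r) hn A hA j
  rw [mem_SR]
  constructor
  · intro t
    rw [h0, sub_zero]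
    by_cases ht : t.val = j.val + 1
    · unfold tv
      rw [if_pos ht, ht]
    · unfold tv
      rw [if_neg ht]
      by_cases hrow : 1 ≤ t.val ∧ t.val ≤ k
      · have : A ⟨j.val + 1, by omega⟩ t = 0 := hA _ _ (by omega)
        rw [this, mul_zero]
        exact dvd_zero _
      · have hc1 : c1 k m r t.val = 0 := by simp [c1, hrow]
        rw [hc1, pow_zero]
        exact one_dvd _
  · intro t
    rw [h0, sub_zero, tv_sum hn hpr hk A hA A hA j t]
    by_cases ht : t.val = j.val + 1
    · unfold tv
      rw [if_pos ht]
      have : A ⟨j.val + 1, by omega⟩ t = 0 := hA _ _ (by omega)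
      rw [this, zero_mul, sub_zero]
      have hc2 : c2 k m t.val = 0 := by
        have := j.isLt
        simp [c2]; omega
      rw [hc2, pow_zero]
      exact one_dvd _
    · unfold tv
      rw [if_neg ht]
      rw [show (p : ℤ) ^ m * A ⟨j.val + 1, by omega⟩ t - A ⟨j.val + 1, by omega⟩ t * (p : ℤ) ^ m
        = 0 by ring]
      exact dvd_zero _

lemma tv_extract (hn : n = k + l + 1) (hpr : ((p : ℤ) ^ r) ≠ 0) (hk : 1 ≤ k)
    (A : Fin n → Fin n → ℤ) (hp1 : ((p : ℤ) ^ m) ≠ 0)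
    (hA : ∀ s t : Fin n, ¬(1 ≤ s.val ∧ s.val ≤ k ∧ k + 1 ≤ t.val) → A s t = 0)
    (A' : Fin n → Fin n → ℤ)
    (hA' : ∀ s t : Fin n, ¬(1 ≤ s.val ∧ s.val ≤ k ∧ k + 1 ≤ t.val) → A' s t = 0)
    (j : Fin k) (i : Fin l) (h1n : j.val + 1 < n) (h2n : k + 1 + i.val < n)
    (hmem : tv p m r hn A j ∈ SR p k m r A' hpr hk) :
    ((p : ℤ) ^ m) ∣ (A ⟨j.val + 1, h1n⟩ ⟨k + 1 + i.val, h2n⟩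
      - A' ⟨j.val + 1, h1n⟩ ⟨k + 1 + i.val, h2n⟩) := by
  set ti : Fin n := ⟨k + 1 + i.val, h2n⟩ with hti
  have h0 := tv_zero (p := p) (m := m) (r := r) hn A hA j
  have h2 := (mem_SR.mp hmem).2 ti
  rw [h0, sub_zero, tv_sum hn hpr hk A hA A' hA' j ti] at h2
  have hc2 : c2 k m ti.val = 2 * m := by
    show c2 k m (k + 1 + i.val) = 2 * m
    simp [c2]
  rw [hc2] at h2
  have htv : tv p m r hn A j ti = (p : ℤ) ^ m * A ⟨j.val + 1, h1n⟩ ti := by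
    unfold tv
    rw [if_neg (show ¬ti.val = j.val + 1 by have := j.isLt; simp [hti]; omega)]
  rw [htv] at h2
  have heq : (p : ℤ) ^ m * A ⟨j.val + 1, h1n⟩ ti
      - A' ⟨j.val + 1, h1n⟩ ti * (p : ℤ) ^ m
      = (p : ℤ) ^ m * (A ⟨j.val + 1, h1n⟩ ti - A' ⟨j.val + 1, h1n⟩ ti) := by ring
  rw [heq, two_mul, pow_add] at h2
  exact (mul_dvd_mul_iff_left hp1).mp h2

end Inj


lemma finite_subrings (n N : ℕ) (hN : N ≠ 0) :
    Finite {S : AddSubgroup (Fin n → ℤ) //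
      (1 : Fin n → ℤ) ∈ S ∧ (∀ x ∈ S, ∀ y ∈ S, x * y ∈ S) ∧ S.index = N} := by
  haveI : NeZero N := ⟨hN⟩
  set red : (Fin n → ℤ) → (Fin n → ZMod N) := fun x t => ((x t : ℤ) : ZMod N) with hred
  have key : ∀ (S : AddSubgroup (Fin n → ℤ)), S.index = N →
      ∀ x : Fin n → ℤ, (∀ t, (N : ℤ) ∣ x t) → x ∈ S := by
    intro S hS x hx
    have h : x = (N : ℕ) • fun t => x t / (N : ℤ) := by
      funext t
      simp only [Pi.smul_apply, nsmul_eq_mul]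
      rw [Int.mul_ediv_cancel' (hx t)]
    rw [h]
    have := S.nsmul_index_mem (fun t => x t / (N : ℤ))
    rwa [hS] at this
  set Φ : {S : AddSubgroup (Fin n → ℤ) //
      (1 : Fin n → ℤ) ∈ S ∧ (∀ x ∈ S, ∀ y ∈ S, x * y ∈ S) ∧ S.index = N}
      → Set (Fin n → ZMod N) := fun S => red '' (S.val : Set (Fin n → ℤ)) with hΦ
  have hinj : Function.Injective Φ := by
    intro S₁ S₂ h
    have main : ∀ (T₁ T₂ : {S : AddSubgroup (Fin n → ℤ) //
        (1 : Fin n → ℤ) ∈ S ∧ (∀ x ∈ S, ∀ y ∈ S, x * y ∈ S) ∧ S.index = N}),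
        Φ T₁ = Φ T₂ → ∀ x, x ∈ T₁.val → x ∈ T₂.val := by
      intro T₁ T₂ hT x hx
      have : red x ∈ Φ T₂ := by
        rw [← hT]
        exact ⟨x, hx, rfl⟩
      obtain ⟨y, hy, hxy⟩ := this
      have hdvd : ∀ t, (N : ℤ) ∣ (x t - y t) := by
        intro t
        have := congrFun hxy t
        rw [hred] at this
        have h2 : ((y t : ℤ) : ZMod N) = ((x t : ℤ) : ZMod N) := this
        rw [ZMod.intCast_eq_intCast_iff] at h2
        exact h2.dvd
      have hmem : x - y ∈ T₂.val := key T₂.val T₂.2.2.2 _ hdvd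
      have : (x - y) + y ∈ T₂.val := T₂.val.add_mem hmem hy
      rwa [sub_add_cancel] at this
    apply Subtype.ext
    apply AddSubgroup.ext
    intro x
    exact ⟨main S₁ S₂ h x, main S₂ S₁ h.symm x⟩
  exact Finite.of_injective Φ hinj


lemma amat_inj {n p k l m r : ℕ} [NeZero n] (hp : p.Prime) (hn : n = k + l + 1)
    (hpr : ((p : ℤ) ^ r) ≠ 0) (hk : 1 ≤ k)
    (a a' : Fin k → Fin l → Fin (p ^ m))
    (hS : SR p k m r (Amat hn p m a) hpr hk = SR p k m r (Amat hn p m a') hpr hk) :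
    a = a' := by
  funext j i
  have h1n : j.val + 1 < n := by have := j.isLt; omega
  have h2n : k + 1 + i.val < n := by have := i.isLt; omega
  have hA := Amat_mask hn a
  have hA' := Amat_mask hn a'
  have hmem : tv p m r hn (Amat hn p m a) j ∈ SR p k m r (Amat hn p m a') hpr hk := by
    rw [← hS]
    exact tv_mem hn hpr hk _ hA j
  have hdvd := tv_extract hn hpr hk _ (pow_ne_zero m (by exact_mod_cast hp.ne_zero)) hA _ hA'
    j i h1n h2n hmem
  have hval : Amat hn p m a ⟨j.val + 1, h1n⟩ ⟨k + 1 + i.val, h2n⟩ = ((a j i).val : ℤ) := by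
    unfold Amat
    rw [dif_pos (show 1 ≤ j.val + 1 ∧ j.val + 1 ≤ k ∧ k + 1 ≤ k + 1 + i.val by
      have := j.isLt; omega)]
    congr 2 <;> apply Fin.ext <;> simp
  have hval' : Amat hn p m a' ⟨j.val + 1, h1n⟩ ⟨k + 1 + i.val, h2n⟩ = ((a' j i).val : ℤ) := by
    unfold Amat
    rw [dif_pos (show 1 ≤ j.val + 1 ∧ j.val + 1 ≤ k ∧ k + 1 ≤ k + 1 + i.val by
      have := j.isLt; omega)]
    congr 2 <;> apply Fin.ext <;> simp
  rw [hval, hval'] at hdvd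
  have hb1 : (a j i).val < p ^ m := (a j i).isLt
  have hb2 : (a' j i).val < p ^ m := (a' j i).isLt
  have hz : ((a j i).val : ℤ) - ((a' j i).val : ℤ) = 0 := by
    refine Int.eq_zero_of_abs_lt_dvd hdvd ?_
    rw [abs_lt]
    constructor
    · have : (0 : ℤ) ≤ ((a j i).val : ℤ) := Int.natCast_nonneg _
      have h2 : ((a' j i).val : ℤ) < (p : ℤ) ^ m := by exact_mod_cast hb2
      omega
    · have : (0 : ℤ) ≤ ((a' j i).val : ℤ) := Int.natCast_nonneg _
      have h2 : ((a j i).val : ℤ) < (p : ℤ) ^ m := by exact_mod_cast hb1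
      omega
  apply Fin.ext
  omega

end Stmt10

/-- For `n ≥ 2`, `e ≥ n-1`, and `b(n,e) = max_{0 ≤ d ≤ n-1} ⌊e/(n-1+d)⌋·d·(n-1-d)`,
we have `f_n(p^e) ≥ p^{b(n,e)}`. -/
theorem stmt_10 (n e p : ℕ) (hn : 2 ≤ n) (he : n - 1 ≤ e) (hp : p.Prime) :
    p ^ ((Finset.range n).sup fun d => (e / (n - 1 + d)) * d * (n - 1 - d)) ≤
      numSubrings n (p ^ e) := by
  classical
  haveI : NeZero n := ⟨by omega⟩
  obtain ⟨d, hd2, hdb⟩ : ∃ d, d ≤ n - 2 ∧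
      ((Finset.range n).sup fun d => (e / (n - 1 + d)) * d * (n - 1 - d))
        = (e / (n - 1 + d)) * d * (n - 1 - d) := by
    obtain ⟨d₀, hd₀mem, hd₀⟩ := Finset.exists_mem_eq_sup (Finset.range n)
      ⟨0, Finset.mem_range.mpr (by omega)⟩ (fun d => (e / (n - 1 + d)) * d * (n - 1 - d))
    have hd₀n : d₀ < n := Finset.mem_range.mp hd₀mem
    by_cases hc : d₀ ≤ n - 2
    · exact ⟨d₀, hc, hd₀⟩
    · refine ⟨0, by omega, ?_⟩
      have hd₀n1 : d₀ = n - 1 := by omega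
      rw [hd₀, hd₀n1]
      simp [Nat.sub_self]
  set k := n - 1 - d with hkdef
  set l := d with hldef
  set m := e / (n - 1 + d) with hmdef
  set r := e - m * (n - 1 + d) with hrdef
  have hk : 1 ≤ k := by omega
  have hnkl : n = k + l + 1 := by omega
  have hpne : ((p : ℤ)) ≠ 0 := by exact_mod_cast hp.ne_zero
  have hpr : ((p : ℤ) ^ r) ≠ 0 := pow_ne_zero _ hpne
  have hle : m * (n - 1 + d) ≤ e := by
    exact Nat.div_mul_le_self e (n - 1 + d)
  have hexp : 2 * m * l + (m * k + r) = e := by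
    have h1 : 2 * m * l + m * k = m * (k + 2 * l) := by ring
    have h2 : k + 2 * l = (n - 1 + d) := by omega
    have h3 : 2 * m * l + m * k = m * (n - 1 + d) := by rw [h1, h2]
    omega
  -- the injection
  haveI : Finite {S : AddSubgroup (Fin n → ℤ) //
      (1 : Fin n → ℤ) ∈ S ∧ (∀ x ∈ S, ∀ y ∈ S, x * y ∈ S) ∧ S.index = p ^ e} :=
    Stmt10.finite_subrings n (p ^ e) (pow_ne_zero e hp.ne_zero)
  set F : (Fin k → Fin l → Fin (p ^ m)) → {S : AddSubgroup (Fin n → ℤ) //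
      (1 : Fin n → ℤ) ∈ S ∧ (∀ x ∈ S, ∀ y ∈ S, x * y ∈ S) ∧ S.index = p ^ e} :=
    fun a => ⟨Stmt10.SR p k m r (Stmt10.Amat hnkl p m a) hpr hk,
      Stmt10.one_mem_SR hpr hk,
      fun x hx y hy => Stmt10.mul_mem_SR hpr hk (Stmt10.Amat_mask hnkl a) hx hy,
      by rw [Stmt10.SR_index hpr hk hnkl (Stmt10.Amat_mask hnkl a), hexp]⟩ with hF
  have hFinj : Function.Injective F := by
    intro a a' h
    have := congrArg Subtype.val h
    exact Stmt10.amat_inj hp hnkl hpr hk a a' this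
  have hcard := Nat.card_le_card_of_injective F hFinj
  have hdom : Nat.card (Fin k → Fin l → Fin (p ^ m)) = p ^ (m * l * k) := by
    rw [Nat.card_eq_fintype_card]
    simp only [Fintype.card_fun, Fintype.card_fin]
    rw [← pow_mul, ← pow_mul, Nat.mul_assoc]
  have hexp2 : (e / (n - 1 + d)) * d * (n - 1 - d) = m * l * k := rfl
  rw [hdb, hexp2, ← hdom]
  exact hcard
end

section
/- Fix a prime p and an integer n ≥ 2. The number of additive subgroups G of Z^n with Z·(1,...,1) + p^2·Z^n ⊆ G ⊆ Z·(1,...,1) + p·Z^n and [Z^n : G] = p^{n-1+d} equals the Gaussian binomial coefficient [n-1 choose d]_p, the number of d-dimensional F_p-subspaces of F_p^{n-1}; in particular all such G are subrings of Z^n, so f_n(p^{n-1+d}) ≥ [n-1 choose d]_p. -/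
open Module Finset

lemma nat_card_sigma {ι : Type*} [Fintype ι] (f : ι → Type*) [∀ i, Finite (f i)] :
    Nat.card (Σ i, f i) = ∑ i, Nat.card (f i) := by
  letI := fun i => Fintype.ofFinite (f i)
  rw [Nat.card_eq_fintype_card, Fintype.card_sigma]
  exact Finset.sum_congr rfl fun i _ => (Nat.card_eq_fintype_card).symm

section count
variable {K V : Type*} [Field K] [Fintype K] [AddCommGroup V] [Module K V] [Finite V]

private noncomputable def fiberEquiv (d : ℕ) (W : Submodule K V) (hW : finrank K W = d) :
    {s : {s : Fin d → V // LinearIndependent K s} //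
        Submodule.span K (Set.range s.1) = W}
      ≃ {t : Fin d → W // LinearIndependent K t} where
  toFun s := ⟨fun i => ⟨s.1.1 i, by
      have h := Submodule.subset_span (R := K) (Set.mem_range_self (f := s.1.1) i)
      rwa [s.2] at h⟩,
    by
      apply LinearIndependent.of_comp W.subtype
      exact s.1.2⟩
  invFun t := ⟨⟨fun i => (t.1 i : V), t.2.map' W.subtype W.ker_subtype⟩, by
      apply Submodule.eq_of_le_of_finrank_eq
      · rw [Submodule.span_le]; rintro _ ⟨i, rfl⟩; exact (t.1 i).2
      · show finrank K (Submodule.span K (Set.range (W.subtype ∘ t.1))) = finrank K W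
        rw [finrank_span_eq_card (t.2.map' W.subtype W.ker_subtype), Fintype.card_fin, hW]⟩
  left_inv s := by ext i; rfl
  right_inv t := by ext i; rfl

lemma card_subspaces_mul (d : ℕ) (hd : d ≤ finrank K V) :
    Nat.card {W : Submodule K V // finrank K W = d} *
      ∏ i : Fin d, (Fintype.card K ^ d - Fintype.card K ^ (i : ℕ)) =
    ∏ i : Fin d, (Fintype.card K ^ finrank K V - Fintype.card K ^ (i : ℕ)) := by
  classical
  have : Finite (Submodule K V) := Finite.of_injective _ SetLike.coe_injective
  letI := Fintype.ofFinite V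
  letI : Fintype {W : Submodule K V // finrank K W = d} := Fintype.ofFinite _
  rw [← card_linearIndependent (K := K) (V := V) hd]
  have e := Equiv.sigmaFiberEquiv (fun s : {s : Fin d → V // LinearIndependent K s} =>
    (⟨Submodule.span K (Set.range s.1), by
        rw [finrank_span_eq_card s.2, Fintype.card_fin]⟩ :
      {W : Submodule K V // finrank K W = d}))
  rw [← Nat.card_congr e, nat_card_sigma]
  have hfib : ∀ W : {W : Submodule K V // finrank K W = d},
      Nat.card {s : {s : Fin d → V // LinearIndependent K s} //
        (⟨Submodule.span K (Set.range s.1), by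
          rw [finrank_span_eq_card s.2, Fintype.card_fin]⟩ :
            {W : Submodule K V // finrank K W = d}) = W} =
      ∏ i : Fin d, (Fintype.card K ^ d - Fintype.card K ^ (i : ℕ)) := by
    intro W
    have e2 : {s : {s : Fin d → V // LinearIndependent K s} //
        (⟨Submodule.span K (Set.range s.1), by
          rw [finrank_span_eq_card s.2, Fintype.card_fin]⟩ :
            {W : Submodule K V // finrank K W = d}) = W} ≃
        {s : {s : Fin d → V // LinearIndependent K s} //
          Submodule.span K (Set.range s.1) = W.1} :=
      Equiv.subtypeEquivRight (fun s => by
        constructor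
        · intro h; exact congrArg Subtype.val h
        · intro h; exact Subtype.ext h)
    rw [Nat.card_congr (e2.trans (fiberEquiv d W.1 W.2))]
    have hW : finrank K (W.1) = d := W.2
    rw [card_linearIndependent (K := K) (V := W.1) (by rw [hW] : d ≤ finrank K W.1), hW]
  simp_rw [hfib]
  rw [Finset.sum_const, Nat.card_eq_fintype_card, smul_eq_mul, Finset.card_univ]
end count

set_option maxHeartbeats 1000000

section ortho
variable {K : Type*} [Field K] {n : ℕ}

noncomputable def dotForm (K : Type*) [Field K] (n : ℕ) :
    LinearMap.BilinForm K (Fin n → K) :=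
  LinearMap.mk₂ K (fun x y => ∑ i, x i * y i)
    (fun x x' y => by simp [add_mul, Finset.sum_add_distrib])
    (fun a x y => by simp [Finset.mul_sum, mul_assoc])
    (fun x y y' => by simp [mul_add, Finset.sum_add_distrib])
    (fun a x y => by simp [Finset.mul_sum, mul_left_comm])

lemma dotForm_apply (x y : Fin n → K) : dotForm K n x y = ∑ i, x i * y i := rfl

lemma dotForm_symm : ∀ x y : Fin n → K, dotForm K n x y = dotForm K n y x := by
  intro x y; simp [dotForm_apply, mul_comm]

lemma dotForm_refl : (dotForm K n).IsRefl := by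
  intro x y h; rw [dotForm_symm] at h; exact h

lemma dotForm_nondeg : (dotForm K n).Nondegenerate := by
  refine ⟨?_, ?_⟩
  intro x hx
  funext i
  have := hx (Pi.single i 1)
  simp only [dotForm_apply, Pi.single_apply, mul_ite, mul_one, mul_zero,
    Finset.sum_ite_eq', Finset.mem_univ, if_true] at this
  exact this
  intro x hx; funext i; have := hx (Pi.single i 1)
  simpa [dotForm_apply, Pi.single_apply] using this

lemma card_subspaces_containing_one
    [Fintype K] (n d : ℕ) (u : Fin n → K) (hu : u ≠ 0) (hd : d ≤ n - 1) (hn : 1 ≤ n) :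
    Nat.card {W : Submodule K (Fin n → K) // u ∈ W ∧ finrank K W = n - d} *
      ∏ i : Fin d, (Fintype.card K ^ d - Fintype.card K ^ (i : ℕ)) =
    ∏ i : Fin d, (Fintype.card K ^ (n - 1) - Fintype.card K ^ (i : ℕ)) := by
  classical
  set B := dotForm K n with hB
  set U := B.orthogonal (Submodule.span K {u}) with hU
  have hrkV : finrank K (Fin n → K) = n := by
    rw [Module.finrank_fintype_fun_eq_card, Fintype.card_fin]
  have hrkU : finrank K U = n - 1 := by
    rw [hU, LinearMap.BilinForm.finrank_orthogonal dotForm_nondeg,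
      finrank_span_singleton hu, hrkV]
  -- Step 1: orthogonal complement bijection
  have E1 : {W : Submodule K (Fin n → K) // u ∈ W ∧ finrank K W = n - d} ≃
      {W' : Submodule K (Fin n → K) // W' ≤ U ∧ finrank K W' = d} := by
    refine ⟨fun W => ⟨B.orthogonal W.1, ?_, ?_⟩, fun W' => ⟨B.orthogonal W'.1, ?_, ?_⟩, ?_, ?_⟩
    · exact LinearMap.BilinForm.orthogonal_le
        ((Submodule.span_singleton_le_iff_mem u W.1).2 W.2.1)
    · rw [LinearMap.BilinForm.finrank_orthogonal dotForm_nondeg, W.2.2, hrkV]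
      omega
    · rw [LinearMap.BilinForm.mem_orthogonal_iff]
      intro y hy
      have : y ∈ U := W'.2.1 hy
      rw [hU, LinearMap.BilinForm.mem_orthogonal_iff] at this
      have h2 := this u (Submodule.mem_span_singleton_self u)
      exact dotForm_refl _ _ h2
    · rw [LinearMap.BilinForm.finrank_orthogonal dotForm_nondeg, W'.2.2, hrkV]
    · intro W
      exact Subtype.ext
        (LinearMap.BilinForm.orthogonal_orthogonal dotForm_nondeg dotForm_refl W.1)
    · intro W'
      exact Subtype.ext
        (LinearMap.BilinForm.orthogonal_orthogonal dotForm_nondeg dotForm_refl W'.1)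
  -- Step 2: restrict to U
  have E2 : {W'' : Submodule K U // finrank K W'' = d} ≃
      {W' : Submodule K (Fin n → K) // W' ≤ U ∧ finrank K W' = d} := by
    refine ((Submodule.MapSubtype.orderIso U).toEquiv.subtypeEquiv fun W'' => ?_).trans
      (Equiv.subtypeSubtypeEquivSubtypeInter _ _)
    show finrank K W'' = d ↔ finrank K (W''.map U.subtype) = d
    rw [Submodule.finrank_map_subtype_eq]
  rw [Nat.card_congr (E1.trans E2.symm), ← hrkU]
  exact card_subspaces_mul d (by rw [hrkU]; exact hd)
end ortho


section zmod
variable (p n : ℕ)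

/-- Componentwise reduction mod `m`. -/
def piH (m n : ℕ) : (Fin n → ℤ) →+ (Fin n → ZMod m) where
  toFun x := fun i => (x i : ZMod m)
  map_zero' := by funext i; simp
  map_add' x y := by funext i; push_cast; simp

@[simp] lemma piH_apply (m n : ℕ) (x : Fin n → ℤ) (i : Fin n) :
    piH m n x i = (x i : ZMod m) := rfl

/-- Multiplication by `p` as a map `ZMod p →+ ZMod (p^2)`. -/
noncomputable def deltaH (p : ℕ) : ZMod p →+ ZMod (p^2) :=
  ZMod.lift p ⟨(zmultiplesHom _) ((p : ZMod (p^2))), by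
    rw [zmultiplesHom_apply, zsmul_eq_mul]
    push_cast
    rw [← pow_two, ← Nat.cast_pow, ZMod.natCast_self]⟩

lemma deltaH_intCast (x : ℤ) : deltaH p ((x : ZMod p)) = ((p * x : ℤ) : ZMod (p^2)) := by
  rw [deltaH, ZMod.lift_coe, zmultiplesHom_apply, zsmul_eq_mul]
  push_cast
  ring

lemma zmod_val_intCast {m : ℕ} [NeZero m] (v : ZMod m) : (((v.val : ℤ)) : ZMod m) = v := by
  push_cast
  exact ZMod.natCast_rightInverse v

lemma deltaH_injective (hp : p.Prime) : Function.Injective (deltaH p) := by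
  haveI : NeZero p := ⟨hp.pos.ne'⟩
  have h0 : ∀ c : ZMod p, deltaH p c = 0 → c = 0 := by
    intro c hc
    rw [← zmod_val_intCast c, deltaH_intCast, ZMod.intCast_zmod_eq_zero_iff_dvd] at hc
    obtain ⟨t, ht⟩ := hc
    have hc2 : (c.val : ℤ) = p * t := by
      have hp0 : (p : ℤ) ≠ 0 := by exact_mod_cast hp.pos.ne'
      have : (p : ℤ) * (c.val : ℤ) = (p : ℤ) * ((p : ℤ) * t) := by push_cast at ht ⊢; linarith
      exact mul_left_cancel₀ hp0 this
    have hdvd : (p : ℤ) ∣ (c.val : ℤ) := ⟨t, hc2⟩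
    rw [Int.natCast_dvd_natCast] at hdvd
    have hlt : c.val < p := ZMod.val_lt c
    have hval : c.val = 0 := by
      rcases Nat.eq_zero_or_pos c.val with h | h
      · exact h
      · exact absurd (Nat.le_of_dvd h hdvd) (by omega)
    exact (ZMod.val_eq_zero c).1 hval
  intro b b' h
  have := h0 (b - b') (by rw [map_sub, h, sub_self])
  exact sub_eq_zero.1 this
end zmod

section psi
variable (p n : ℕ)

/-- The subgroup `ℤ·1 + p·{x : π x ∈ W}`. -/
def psiSub (W : Submodule (ZMod p) (Fin n → ZMod p)) : AddSubgroup (Fin n → ℤ) where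
  carrier := {g | ∃ (a : ℤ) (x : Fin n → ℤ),
    g = a • (1 : Fin n → ℤ) + (p : ℤ) • x ∧ piH p n x ∈ W}
  zero_mem' := ⟨0, 0, by simp, by simp⟩
  add_mem' := by
    rintro g g' ⟨a, x, rfl, hx⟩ ⟨a', x', rfl, hx'⟩
    refine ⟨a + a', x + x', by rw [add_smul, smul_add]; abel, ?_⟩
    rw [map_add]; exact W.add_mem hx hx'
  neg_mem' := by
    rintro g ⟨a, x, rfl, hx⟩
    refine ⟨-a, -x, by rw [neg_smul, smul_neg]; abel, ?_⟩
    rw [map_neg]; exact W.neg_mem hx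

lemma mem_psiSub {W : Submodule (ZMod p) (Fin n → ZMod p)} {g : Fin n → ℤ} :
    g ∈ psiSub p n W ↔ ∃ (a : ℤ) (x : Fin n → ℤ),
      g = a • (1 : Fin n → ℤ) + (p : ℤ) • x ∧ piH p n x ∈ W := Iff.rfl

lemma psiSub_index (hp : p.Prime) (hn : 1 ≤ n) (W : Submodule (ZMod p) (Fin n → ZMod p))
    (hu : (1 : Fin n → ZMod p) ∈ W) :
    (psiSub p n W).index = p ^ (2 * n - 1 - finrank (ZMod p) W) := by
  classical
  haveI : NeZero p := ⟨hp.pos.ne'⟩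
  haveI : NeZero (p ^ 2) := ⟨pow_ne_zero 2 hp.pos.ne'⟩
  haveI : Fact p.Prime := ⟨hp⟩
  set r := finrank (ZMod p) W with hr
  have hrn : r ≤ n := by
    have := Submodule.finrank_le (R := ZMod p) W
    rwa [Module.finrank_fintype_fun_eq_card, Fintype.card_fin] at this
  set σ := piH (p ^ 2) n with hσ
  have hker : σ.ker ≤ psiSub p n W := by
    intro x hx
    rw [AddMonoidHom.mem_ker] at hx
    have hdvd : ∀ i, ((p : ℤ)) ^ 2 ∣ x i := by
      intro i
      have h1 : ((x i : ℤ) : ZMod (p ^ 2)) = 0 := congrFun hx i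
      rw [ZMod.intCast_zmod_eq_zero_iff_dvd] at h1
      push_cast at h1
      exact h1
    refine ⟨0, (p : ℤ) • fun i => x i / (p : ℤ) ^ 2, ?_, ?_⟩
    · funext i
      simp only [zero_smul, zero_add, Pi.smul_apply, smul_eq_mul]
      rw [show (p : ℤ) * ((p : ℤ) * (x i / (p : ℤ) ^ 2)) =
        x i / (p : ℤ) ^ 2 * (p : ℤ) ^ 2 by ring, Int.ediv_mul_cancel (hdvd i)]
    · have h2 : piH p n ((p : ℤ) • fun i => x i / (p : ℤ) ^ 2) = 0 := by
        funext i
        simp only [piH_apply, Pi.smul_apply, smul_eq_mul, Pi.zero_apply]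
        push_cast
        simp
      rw [h2]; exact W.zero_mem
  have hsurj : Function.Surjective σ := by
    intro v
    refine ⟨fun i => ((v i).val : ℤ), funext fun i => ?_⟩
    exact zmod_val_intCast (v i)
  have hidx : ((psiSub p n W).map σ).index = (psiSub p n W).index := by
    rw [AddSubgroup.index_map, sup_of_le_left hker, AddMonoidHom.range_eq_top.2 hsurj,
      AddSubgroup.index_top, mul_one]
  set H := (psiSub p n W).map σ with hH
  -- the parametrizing homomorphism
  set g' : (ZMod (p ^ 2)) × W →+ (Fin n → ZMod (p ^ 2)) :=
  { toFun := fun aw => aw.1 • (1 : Fin n → ZMod (p ^ 2)) + fun i => deltaH p (aw.2.1 i)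
    map_zero' := by funext i; simp
    map_add' := by
      rintro ⟨a, w⟩ ⟨a', w'⟩
      funext i
      simp only [Prod.fst_add, Prod.snd_add, Submodule.coe_add, Pi.add_apply,
        Pi.smul_apply, Pi.one_apply, smul_eq_mul, mul_one, map_add]
      ring } with hg'
  have hrange : g'.range = H := by
    ext v
    constructor
    · rintro ⟨⟨a, w⟩, rfl⟩
      refine ⟨(a.val : ℤ) • 1 + (p : ℤ) • (fun i => ((w.1 i).val : ℤ)),
        ⟨(a.val : ℤ), fun i => ((w.1 i).val : ℤ), rfl, ?_⟩, ?_⟩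
      · have hw : piH p n (fun i => ((w.1 i).val : ℤ)) = w.1 := by
          funext i; exact zmod_val_intCast (w.1 i)
        rw [hw]; exact w.2
      · funext i
        show (((a.val : ℤ) * 1 + (p : ℤ) * ((w.1 i).val : ℤ) : ℤ) : ZMod (p ^ 2))
            = a * 1 + deltaH p (w.1 i)
        have h1 : deltaH p (w.1 i) = ((p * ((w.1 i).val : ℤ) : ℤ) : ZMod (p ^ 2)) := by
          rw [← zmod_val_intCast (w.1 i), deltaH_intCast, zmod_val_intCast]
        have ha : ((a.val : ℕ) : ZMod (p ^ 2)) = a := ZMod.natCast_rightInverse a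
        rw [h1]
        push_cast [ha]
        try ring
    · rintro ⟨g, ⟨a, x, rfl, hx⟩, rfl⟩
      refine ⟨((a : ZMod (p ^ 2)), ⟨piH p n x, hx⟩), ?_⟩
      funext i
      show ((a : ZMod (p ^ 2))) * 1 + deltaH p ((x i : ZMod p)) = _
      rw [mul_one, deltaH_intCast]
      show _ = ((a * 1 + p * x i : ℤ) : ZMod (p ^ 2))
      push_cast
      ring
  -- the kernel
  set u : W := ⟨(1 : Fin n → ZMod p), hu⟩ with huu
  set k : ZMod p →+ (ZMod (p ^ 2)) × W :=
  { toFun := fun b => (deltaH p b, -(b • u))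
    map_zero' := by simp
    map_add' := by intro b b'; simp [add_smul]; abel } with hk
  have i0 : Fin n := ⟨0, hn⟩
  have hkerg : g'.ker = k.range := by
    ext ⟨a, w⟩
    rw [AddMonoidHom.mem_ker]
    constructor
    · intro hmem
      have hcomp : ∀ i, a + deltaH p (w.1 i) = 0 := by
        intro i
        have h := congrFun hmem i
        have h' : a * 1 + deltaH p (w.1 i) = 0 := h
        rwa [mul_one] at h'
      set c := w.1 i0 with hc
      have hall : ∀ i, w.1 i = c := by
        intro i
        apply deltaH_injective p hp
        have h1 := hcomp i
        have h2 := hcomp i0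
        rw [← hc] at h2
        linear_combination h1 - h2
      refine ⟨-c, ?_⟩
      have h2 := hcomp i0
      rw [← hc] at h2
      apply Prod.ext
      · show deltaH p (-c) = a
        rw [map_neg]
        linear_combination -h2
      · show -((-c) • u) = w
        apply Subtype.ext
        funext i
        show -((-c) * (1 : ZMod p)) = w.1 i
        rw [mul_one, neg_neg, hall i]
    · rintro ⟨b, hb⟩
      rw [← hb]
      funext i
      show deltaH p b * 1 + deltaH p ((-(b • u) : W).1 i) = 0
      have : ((-(b • u) : W)).1 i = -(b * 1) := rfl
      rw [this, mul_one, mul_one, map_neg, add_neg_cancel]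
  have hkinj : Function.Injective k := by
    intro b b' h
    have h2 : ((k b).2 : Fin n → ZMod p) i0 = ((k b').2 : Fin n → ZMod p) i0 := by rw [h]
    have h3 : -(b * 1) = -(b' * 1) := h2
    simpa using h3
  have hcardker : Nat.card g'.ker = p := by
    rw [hkerg]
    have hE := Nat.card_congr (AddMonoidHom.ofInjective hkinj).toEquiv
    rw [← hE, Nat.card_zmod]
  have hcardH : Nat.card H * p = p ^ (2 + r) := by
    have h1 : Nat.card ((ZMod (p ^ 2)) × W) = p ^ (2 + r) := by
      letI : Fintype W := Fintype.ofFinite W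
      rw [Nat.card_prod, Nat.card_zmod, Nat.card_eq_fintype_card,
        card_eq_pow_finrank (K := ZMod p) (V := W), ZMod.card, ← hr, ← pow_add]
    have h2 := AddSubgroup.card_eq_card_quotient_mul_card_addSubgroup g'.ker
    rw [Nat.card_congr (QuotientAddGroup.quotientKerEquivRange g').toEquiv, hrange,
      h1, hcardker] at h2
    exact h2.symm
  have hfin : Nat.card (Fin n → ZMod (p ^ 2)) = p ^ (2 * n) := by
    rw [Nat.card_pi]
    simp only [Nat.card_zmod]
    rw [Finset.prod_const, Finset.card_univ, Fintype.card_fin, ← pow_mul]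
  have hmain := AddSubgroup.index_mul_card H
  rw [hidx, hfin] at hmain
  have hfinal : (psiSub p n W).index * p ^ (2 + r) = p ^ (2 * n - 1 - r) * p ^ (2 + r) := by
    rw [← hcardH, ← mul_assoc, hmain, hcardH, ← pow_succ, ← pow_add]
    congr 1
    omega
  exact Nat.eq_of_mul_eq_mul_right (pow_pos hp.pos _) hfinal
end psi


section phi
variable (p n : ℕ)

lemma exists_eq_add_smul (hp : p ≠ 0) (x x' : Fin n → ℤ)
    (h : ∀ i, ((x i : ZMod p)) = ((x' i : ZMod p))) :
    ∃ z : Fin n → ℤ, x = x' + (p : ℤ) • z := by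
  refine ⟨fun i => (x i - x' i) / (p : ℤ), funext fun i => ?_⟩
  have hdvd : (p : ℤ) ∣ x i - x' i := by
    have : ((x i - x' i : ℤ) : ZMod p) = 0 := by push_cast; rw [h i]; ring
    rwa [ZMod.intCast_zmod_eq_zero_iff_dvd] at this
  show x i = x' i + (p : ℤ) * ((x i - x' i) / (p : ℤ))
  rw [show (p : ℤ) * ((x i - x' i) / (p : ℤ)) = (x i - x' i) / (p : ℤ) * (p : ℤ) by ring,
    Int.ediv_mul_cancel hdvd]
  ring

def phiSub (G : AddSubgroup (Fin n → ℤ)) : AddSubgroup (Fin n → ZMod p) where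
  carrier := {v | ∃ x : Fin n → ℤ, piH p n x = v ∧ (p : ℤ) • x ∈ G}
  zero_mem' := ⟨0, by funext i; simp [piH], by simpa using G.zero_mem⟩
  add_mem' := by
    rintro v v' ⟨x, rfl, hx⟩ ⟨x', rfl, hx'⟩
    exact ⟨x + x', by rw [map_add], by rw [smul_add]; exact G.add_mem hx hx'⟩
  neg_mem' := by
    rintro v ⟨x, rfl, hx⟩
    exact ⟨-x, by rw [map_neg], by rw [smul_neg]; exact G.neg_mem hx⟩

def phiMod (G : AddSubgroup (Fin n → ℤ)) : Submodule (ZMod p) (Fin n → ZMod p) :=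
  AddSubgroup.toZModSubmodule p (phiSub p n G)

lemma mem_phiMod {G : AddSubgroup (Fin n → ℤ)} {v : Fin n → ZMod p} :
    v ∈ phiMod p n G ↔ ∃ x : Fin n → ℤ, piH p n x = v ∧ (p : ℤ) • x ∈ G := Iff.rfl

lemma one_mem_phiMod {G : AddSubgroup (Fin n → ℤ)}
    (h1 : ∀ (a : ℤ) (x : Fin n → ℤ), a • (1 : Fin n → ℤ) + ((p : ℤ) ^ 2) • x ∈ G) :
    (1 : Fin n → ZMod p) ∈ phiMod p n G := by
  refine ⟨1, by funext i; simp [piH], ?_⟩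
  have := h1 (p : ℤ) 0
  simpa using this

lemma psi_phi (hp : p ≠ 0) (G : AddSubgroup (Fin n → ℤ))
    (h1 : ∀ (a : ℤ) (x : Fin n → ℤ), a • (1 : Fin n → ℤ) + ((p : ℤ) ^ 2) • x ∈ G)
    (h2 : ∀ g ∈ G, ∃ (a : ℤ) (x : Fin n → ℤ), g = a • (1 : Fin n → ℤ) + (p : ℤ) • x) :
    psiSub p n (phiMod p n G) = G := by
  ext g
  constructor
  · rintro ⟨a, x, rfl, hx⟩
    obtain ⟨x', hx'eq, hx'G⟩ := (mem_phiMod p n).1 hx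
    obtain ⟨z, hz⟩ := exists_eq_add_smul p n hp x x' (fun i => by
      have := congrFun hx'eq i
      exact this.symm)
    have key : a • (1 : Fin n → ℤ) + (p : ℤ) • x =
        (a • (1 : Fin n → ℤ) + ((p : ℤ) ^ 2) • z) + (p : ℤ) • x' := by
      rw [hz, smul_add, smul_smul, ← pow_two]
      abel
    rw [key]
    exact G.add_mem (h1 a z) hx'G
  · intro hg
    obtain ⟨a, x, hax⟩ := h2 g hg
    refine ⟨a, x, hax, (mem_phiMod p n).2 ⟨x, rfl, ?_⟩⟩
    have ha1 : a • (1 : Fin n → ℤ) ∈ G := by simpa using h1 a 0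
    have : (p : ℤ) • x = g - a • (1 : Fin n → ℤ) := by rw [hax]; abel
    rw [this]
    exact G.sub_mem hg ha1

lemma phi_psi (hp : p.Prime) (hn : 1 ≤ n) (W : Submodule (ZMod p) (Fin n → ZMod p))
    (hu : (1 : Fin n → ZMod p) ∈ W) :
    phiMod p n (psiSub p n W) = W := by
  haveI : NeZero p := ⟨hp.pos.ne'⟩
  ext v
  rw [mem_phiMod]
  constructor
  · rintro ⟨x, rfl, hpx⟩
    obtain ⟨a, y, heq, hy⟩ := (mem_psiSub p n).1 hpx
    have i0 : Fin n := ⟨0, hn⟩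
    have hco : ∀ i, (p : ℤ) * x i = a * 1 + (p : ℤ) * y i := fun i => congrFun heq i
    set b := x i0 - y i0 with hb
    have hab : a = (p : ℤ) * b := by
      have := hco i0
      rw [hb]; ring_nf; ring_nf at this; omega
    have hxy : ∀ i, x i = b + y i := by
      intro i
      have := hco i
      rw [hab] at this
      have hp0 : (p : ℤ) ≠ 0 := by exact_mod_cast hp.pos.ne'
      have h2 : (p : ℤ) * x i = (p : ℤ) * (b + y i) := by ring_nf; ring_nf at this; omega
      exact mul_left_cancel₀ hp0 h2
    have hxeq : x = (b • (1 : Fin n → ℤ)) + y := by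
      funext i
      show x i = b * 1 + y i
      rw [mul_one]; exact hxy i
    have : piH p n x = ((b : ZMod p)) • (1 : Fin n → ZMod p) + piH p n y := by
      rw [hxeq, map_add]
      congr 1
      funext i
      show ((b * 1 : ℤ) : ZMod p) = (b : ZMod p) * 1
      push_cast; ring
    rw [this]
    exact W.add_mem (W.smul_mem _ hu) hy
  · intro hv
    refine ⟨fun i => ((v i).val : ℤ), funext fun i => zmod_val_intCast (v i),
      (mem_psiSub p n).2 ⟨0, fun i => ((v i).val : ℤ), by rw [zero_smul, zero_add], ?_⟩⟩
    rwa [show piH p n (fun i => ((v i).val : ℤ)) = v from funext fun i => zmod_val_intCast (v i)]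

lemma subring_cond (hp : p ≠ 0) (G : AddSubgroup (Fin n → ℤ))
    (h1 : ∀ (a : ℤ) (x : Fin n → ℤ), a • (1 : Fin n → ℤ) + ((p : ℤ) ^ 2) • x ∈ G)
    (h2 : ∀ g ∈ G, ∃ (a : ℤ) (x : Fin n → ℤ), g = a • (1 : Fin n → ℤ) + (p : ℤ) • x) :
    ((1 : Fin n → ℤ) ∈ G ∧ ∀ x ∈ G, ∀ y ∈ G, x * y ∈ G) := by
  constructor
  · have := h1 1 0
    simpa using this
  · intro x hx y hy
    obtain ⟨a, x', rfl⟩ := h2 x hx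
    obtain ⟨b, y', rfl⟩ := h2 y hy
    have ha1 : a • (1 : Fin n → ℤ) ∈ G := by simpa using h1 a 0
    have hab1 : (a * b) • (1 : Fin n → ℤ) ∈ G := by simpa using h1 (a * b) 0
    have t1 : a • (b • (1 : Fin n → ℤ) + (p : ℤ) • y') ∈ G := AddSubgroup.zsmul_mem G hy a
    have t2 : b • ((a • (1 : Fin n → ℤ) + (p : ℤ) • x') - a • (1 : Fin n → ℤ)) ∈ G :=
      AddSubgroup.zsmul_mem G (G.sub_mem hx ha1) b
    have t3 : (a * b) • (1 : Fin n → ℤ) + ((p : ℤ) ^ 2) • (x' * y') ∈ G := h1 (a * b) (x' * y')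
    have key : (a • (1 : Fin n → ℤ) + (p : ℤ) • x') * (b • (1 : Fin n → ℤ) + (p : ℤ) • y') =
        a • (b • (1 : Fin n → ℤ) + (p : ℤ) • y')
        + b • ((a • (1 : Fin n → ℤ) + (p : ℤ) • x') - a • (1 : Fin n → ℤ))
        + ((a * b) • (1 : Fin n → ℤ) + ((p : ℤ) ^ 2) • (x' * y'))
        - (a * b) • (1 : Fin n → ℤ) := by
      simp only [zsmul_eq_mul]
      push_cast
      ring
    rw [key]
    exact G.sub_mem (G.add_mem (G.add_mem t1 t2) t3) hab1
end phi

section fin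
variable (n : ℕ)

lemma ker_le_of_index {k : ℕ} (S : AddSubgroup (Fin n → ℤ)) (hS : S.index = k) :
    (piH k n).ker ≤ S := by
  intro x hx
  rw [AddMonoidHom.mem_ker] at hx
  have hdvd : ∀ i, (k : ℤ) ∣ x i := fun i => by
    have : ((x i : ℤ) : ZMod k) = 0 := congrFun hx i
    rwa [ZMod.intCast_zmod_eq_zero_iff_dvd] at this
  have hx2 : x = k • (fun i => x i / (k : ℤ)) := by
    funext i
    show x i = k • (x i / (k : ℤ))
    rw [nsmul_eq_mul,
      show (k : ℤ) * (x i / (k : ℤ)) = x i / (k : ℤ) * (k : ℤ) by ring,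
      Int.ediv_mul_cancel (hdvd i)]
  rw [hx2, ← hS]
  exact AddSubgroup.nsmul_index_mem S _

lemma finite_index_subgroups (k : ℕ) (hk : k ≠ 0) :
    Finite {S : AddSubgroup (Fin n → ℤ) //
      (1 : Fin n → ℤ) ∈ S ∧ (∀ x ∈ S, ∀ y ∈ S, x * y ∈ S) ∧ S.index = k} := by
  haveI : NeZero k := ⟨hk⟩
  haveI : Finite (AddSubgroup (Fin n → ZMod k)) :=
    Finite.of_injective (fun H => (H : Set (Fin n → ZMod k))) SetLike.coe_injective
  apply Finite.of_injective (fun S => AddSubgroup.map (piH k n) S.1)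
  intro S S' h
  have key : ∀ T : AddSubgroup (Fin n → ℤ), T.index = k →
      AddSubgroup.comap (piH k n) (AddSubgroup.map (piH k n) T) = T := by
    intro T hT
    rw [AddSubgroup.comap_map_eq, sup_of_le_left (ker_le_of_index n T hT)]
  have h' : AddSubgroup.map (piH k n) S.1 = AddSubgroup.map (piH k n) S'.1 := h
  apply Subtype.ext
  rw [← key S.1 S.2.2.2, ← key S'.1 S'.2.2.2, h']
end fin


/-- The number of additive subgroups `G` of `ℤⁿ` with
`ℤ·(1,…,1) + p²·ℤⁿ ⊆ G ⊆ ℤ·(1,…,1) + p·ℤⁿ` and `[ℤⁿ : G] = p^{n-1+d}` equals the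
Gaussian binomial `[n-1 choose d]_p = ∏_{i=1}^{d} (p^{n-1}-p^{i-1})/(p^d-p^{i-1})`;
all such `G` are subrings, so `f_n(p^{n-1+d}) ≥ [n-1 choose d]_p`. -/
theorem stmt_19 (p n d : ℕ) (hp : p.Prime) (hn : 2 ≤ n) (hd : d ≤ n - 1) :
    (Nat.card {G : AddSubgroup (Fin n → ℤ) //
        (∀ (a : ℤ) (x : Fin n → ℤ), a • (1 : Fin n → ℤ) + ((p : ℤ) ^ 2) • x ∈ G) ∧
        (∀ g ∈ G, ∃ (a : ℤ) (x : Fin n → ℤ), g = a • (1 : Fin n → ℤ) + (p : ℤ) • x) ∧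
        G.index = p ^ (n - 1 + d)} : ℚ) =
      ∏ i ∈ Finset.Icc 1 d,
        ((p : ℚ) ^ (n - 1) - (p : ℚ) ^ (i - 1)) / ((p : ℚ) ^ d - (p : ℚ) ^ (i - 1)) ∧
    (∀ G : AddSubgroup (Fin n → ℤ),
      (∀ (a : ℤ) (x : Fin n → ℤ), a • (1 : Fin n → ℤ) + ((p : ℤ) ^ 2) • x ∈ G) →
      (∀ g ∈ G, ∃ (a : ℤ) (x : Fin n → ℤ), g = a • (1 : Fin n → ℤ) + (p : ℤ) • x) →
      ((1 : Fin n → ℤ) ∈ G ∧ ∀ x ∈ G, ∀ y ∈ G, x * y ∈ G)) ∧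
    ∏ i ∈ Finset.Icc 1 d,
        ((p : ℚ) ^ (n - 1) - (p : ℚ) ^ (i - 1)) / ((p : ℚ) ^ d - (p : ℚ) ^ (i - 1)) ≤
      (numSubrings n (p ^ (n - 1 + d)) : ℚ) := by
  haveI : Fact p.Prime := ⟨hp⟩
  haveI : NeZero p := ⟨hp.pos.ne'⟩
  -- the bijection between the subgroups and subspaces containing 1
  have E : {W : Submodule (ZMod p) (Fin n → ZMod p) //
      (1 : Fin n → ZMod p) ∈ W ∧ finrank (ZMod p) W = n - d} ≃
    {G : AddSubgroup (Fin n → ℤ) //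
        (∀ (a : ℤ) (x : Fin n → ℤ), a • (1 : Fin n → ℤ) + ((p : ℤ) ^ 2) • x ∈ G) ∧
        (∀ g ∈ G, ∃ (a : ℤ) (x : Fin n → ℤ), g = a • (1 : Fin n → ℤ) + (p : ℤ) • x) ∧
        G.index = p ^ (n - 1 + d)} := by
    refine ⟨fun W => ⟨psiSub p n W.1, ?_, ?_, ?_⟩,
      fun G => ⟨phiMod p n G.1, one_mem_phiMod p n G.2.1, ?_⟩, ?_, ?_⟩
    · intro a x
      refine (mem_psiSub p n).2 ⟨a, (p : ℤ) • x, by rw [smul_smul, ← pow_two], ?_⟩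
      have hz : piH p n ((p : ℤ) • x) = 0 := by
        funext i
        show (((p : ℤ) * x i : ℤ) : ZMod p) = 0
        push_cast
        simp
      rw [hz]; exact W.1.zero_mem
    · rintro g ⟨a, x, hg, _⟩; exact ⟨a, x, hg⟩
    · rw [psiSub_index p n hp (by omega) W.1 W.2.1, W.2.2]
      congr 1
      omega
    · have hG := psi_phi p n hp.pos.ne' G.1 G.2.1 G.2.2.1
      have hidx := psiSub_index p n hp (by omega) (phiMod p n G.1) (one_mem_phiMod p n G.2.1)
      rw [hG, G.2.2.2] at hidx
      have hr : finrank (ZMod p) (phiMod p n G.1) ≤ n := by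
        have := Submodule.finrank_le (R := ZMod p) (phiMod p n G.1)
        rwa [Module.finrank_fintype_fun_eq_card, Fintype.card_fin] at this
      have := Nat.pow_right_injective hp.two_le hidx.symm
      omega
    · intro W
      exact Subtype.ext (phi_psi p n hp (by omega) W.1 W.2.1)
    · intro G
      exact Subtype.ext (psi_phi p n hp.pos.ne' G.1 G.2.1 G.2.2.1)
  -- counting
  have hu1 : (1 : Fin n → ZMod p) ≠ 0 := by
    intro h
    exact one_ne_zero (congrFun h ⟨0, by omega⟩)
  have hcount := card_subspaces_containing_one (K := ZMod p) n d 1 hu1 hd (by omega)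
  simp only [ZMod.card] at hcount
  have hcardeq : Nat.card {G : AddSubgroup (Fin n → ℤ) //
        (∀ (a : ℤ) (x : Fin n → ℤ), a • (1 : Fin n → ℤ) + ((p : ℤ) ^ 2) • x ∈ G) ∧
        (∀ g ∈ G, ∃ (a : ℤ) (x : Fin n → ℤ), g = a • (1 : Fin n → ℤ) + (p : ℤ) • x) ∧
        G.index = p ^ (n - 1 + d)} =
      Nat.card {W : Submodule (ZMod p) (Fin n → ZMod p) //
        (1 : Fin n → ZMod p) ∈ W ∧ finrank (ZMod p) W = n - d} :=
    Nat.card_congr E.symm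
  -- rational manipulations
  have hq1 : (1 : ℚ) < (p : ℚ) := by exact_mod_cast hp.one_lt
  have castsub : ∀ m : ℕ, ∀ i : Fin d, (i : ℕ) < m →
      ((p ^ m - p ^ (i : ℕ) : ℕ) : ℚ) = (p : ℚ) ^ m - (p : ℚ) ^ (i : ℕ) := by
    intro m i him
    rw [Nat.cast_sub (Nat.pow_le_pow_right hp.one_lt.le him.le)]
    push_cast
    ring
  have hprodcast : ∀ m : ℕ, d ≤ m →
      ((∏ i : Fin d, (p ^ m - p ^ (i : ℕ)) : ℕ) : ℚ) =
        ∏ i : Fin d, ((p : ℚ) ^ m - (p : ℚ) ^ (i : ℕ)) := by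
    intro m hm
    rw [Nat.cast_prod]
    exact Finset.prod_congr rfl fun i _ => castsub m i (lt_of_lt_of_le i.2 hm)
  have hsmallne : ∀ i : Fin d, ((p : ℚ) ^ d - (p : ℚ) ^ (i : ℕ)) ≠ 0 := by
    intro i
    have : (p : ℚ) ^ (i : ℕ) < (p : ℚ) ^ d := by
      apply pow_lt_pow_right₀ hq1 i.2
    exact sub_ne_zero.2 (ne_of_gt this)
  have hprodne : (∏ i : Fin d, ((p : ℚ) ^ d - (p : ℚ) ^ (i : ℕ))) ≠ 0 :=
    Finset.prod_ne_zero_iff.2 fun i _ => hsmallne i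
  have hmainq : (Nat.card {W : Submodule (ZMod p) (Fin n → ZMod p) //
        (1 : Fin n → ZMod p) ∈ W ∧ finrank (ZMod p) W = n - d} : ℚ) *
      ∏ i : Fin d, ((p : ℚ) ^ d - (p : ℚ) ^ (i : ℕ)) =
      ∏ i : Fin d, ((p : ℚ) ^ (n - 1) - (p : ℚ) ^ (i : ℕ)) := by
    rw [← hprodcast d le_rfl, ← hprodcast (n - 1) hd, ← Nat.cast_mul, hcount]
  -- rewrite the Icc product
  have hIcc : ∏ i ∈ Finset.Icc 1 d,
        ((p : ℚ) ^ (n - 1) - (p : ℚ) ^ (i - 1)) / ((p : ℚ) ^ d - (p : ℚ) ^ (i - 1)) =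
      ∏ i : Fin d, (((p : ℚ) ^ (n - 1) - (p : ℚ) ^ (i : ℕ)) /
        ((p : ℚ) ^ d - (p : ℚ) ^ (i : ℕ))) := by
    rw [← Finset.Ico_add_one_right_eq_Icc, Finset.prod_Ico_eq_prod_range]
    rw [Fin.prod_univ_eq_prod_range
      (fun i => ((p : ℚ) ^ (n - 1) - (p : ℚ) ^ i) / ((p : ℚ) ^ d - (p : ℚ) ^ i)) d]
    apply Finset.prod_congr (by norm_num) fun i _ => ?_
    rw [show 1 + i - 1 = i from by omega]
  have hconj1 : (Nat.card {G : AddSubgroup (Fin n → ℤ) //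
        (∀ (a : ℤ) (x : Fin n → ℤ), a • (1 : Fin n → ℤ) + ((p : ℤ) ^ 2) • x ∈ G) ∧
        (∀ g ∈ G, ∃ (a : ℤ) (x : Fin n → ℤ), g = a • (1 : Fin n → ℤ) + (p : ℤ) • x) ∧
        G.index = p ^ (n - 1 + d)} : ℚ) =
      ∏ i ∈ Finset.Icc 1 d,
        ((p : ℚ) ^ (n - 1) - (p : ℚ) ^ (i - 1)) / ((p : ℚ) ^ d - (p : ℚ) ^ (i - 1)) := by
    rw [hIcc, Finset.prod_div_distrib, eq_div_iff hprodne, hcardeq]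
    exact hmainq
  refine ⟨hconj1, fun G hG1 hG2 => subring_cond p n hp.pos.ne' G hG1 hG2, ?_⟩
  -- the inequality
  rw [← hconj1]
  rw [Nat.cast_le]
  haveI := finite_index_subgroups n (p ^ (n - 1 + d)) (pow_ne_zero _ hp.pos.ne')
  exact Nat.card_le_card_of_injective
    (fun G => (⟨G.1, (subring_cond p n hp.pos.ne' G.1 G.2.1 G.2.2.1).1,
      (subring_cond p n hp.pos.ne' G.1 G.2.1 G.2.2.1).2, G.2.2.2⟩ :
      {S : AddSubgroup (Fin n → ℤ) //
        (1 : Fin n → ℤ) ∈ S ∧ (∀ x ∈ S, ∀ y ∈ S, x * y ∈ S) ∧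
        S.index = p ^ (n - 1 + d)}))
    (fun G G' h => by
      simp only [Subtype.mk.injEq] at h
      exact Subtype.ext h)
end
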